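/- For every positive integer i and every real α ≥ i + 1, the function x ↦ α |ψ^{(i)}(x)| - x |ψ^{(i+1)}(x)| is completely monotonic on (0, ∞), i.e., (-1)^k times its k-th derivative is nonnegative on (0, ∞) for every nonnegative integer k. -/

import Mathlib

open Real Set MeasureTheory Filter
open scoped Topology

/-- The k-th polygamma function: the (k+1)-st derivative of log Γ. -/
noncomputable def polygamma (k : ℕ) : ℝ → ℝ :=
  iteratedDeriv (k + 1) (fun x => Real.log (Real.Gamma x))

/-- A function is completely monotonic on (0,∞). -/
def CompletelyMonotonicOn (f : ℝ → ℝ) : Prop :=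
  (∀ k : ℕ, ∀ x : ℝ, 0 < x → 0 ≤ (-1 : ℝ) ^ k * iteratedDeriv k f x)


noncomputable def Tser (k : ℕ) (x : ℝ) : ℝ := ∑' n : ℕ, ((x + n) ^ k)⁻¹

lemma summable_sq : Summable (fun n : ℕ => (((n:ℝ)+1)^2)⁻¹) := by
  have h := Real.summable_one_div_nat_pow.mpr (le_refl 2)
  have := (summable_nat_add_iff (f := fun n : ℕ => 1/(n:ℝ)^2) 1).mpr h
  refine this.congr fun n => ?_
  push_cast
  rw [one_div]

lemma xn_ge {x : ℝ} (hx : 0 < x) (n : ℕ) : min x 1 * ((n:ℝ)+1) ≤ x + n := by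
  have h1 : min x 1 ≤ x := min_le_left _ _
  have h2 : min x 1 ≤ 1 := min_le_right _ _
  have h3 : (0:ℝ) ≤ n := n.cast_nonneg
  nlinarith

lemma term_le {x : ℝ} (hx : 0 < x) {k : ℕ} (hk : 2 ≤ k) (n : ℕ) :
    ((x + n) ^ k)⁻¹ ≤ (min x 1 ^ k)⁻¹ * (((n:ℝ)+1)^2)⁻¹ := by
  have hc : 0 < min x 1 := lt_min hx one_pos
  have hxn : (0:ℝ) < x + n := by positivity
  rw [← mul_inv]
  have h1 : min x 1 ^ k * ((n:ℝ)+1)^2 ≤ (x + n) ^ k := by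
    calc min x 1 ^ k * ((n:ℝ)+1)^2 ≤ min x 1 ^ k * ((n:ℝ)+1)^k := by
          have : ((n:ℝ)+1)^2 ≤ ((n:ℝ)+1)^k := pow_le_pow_right₀ (by have := n.cast_nonneg (α := ℝ); linarith) hk
          nlinarith [pow_pos hc k]
      _ = (min x 1 * ((n:ℝ)+1)) ^ k := (mul_pow _ _ _).symm
      _ ≤ (x + n) ^ k := pow_le_pow_left₀ (by positivity) (xn_ge hx n) k
  exact inv_anti₀ (by positivity) h1

lemma summable_Tser {x : ℝ} (hx : 0 < x) {k : ℕ} (hk : 2 ≤ k) :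
    Summable (fun n : ℕ => ((x + n) ^ k)⁻¹) := by
  refine Summable.of_nonneg_of_le (fun n => by positivity) (term_le hx hk) ?_
  exact summable_sq.mul_left _

lemma Tser_nonneg {x : ℝ} (hx : 0 < x) (k : ℕ) : 0 ≤ Tser k x :=
  tsum_nonneg fun n => by positivity

lemma hasDerivAt_term {y : ℝ} (hy : 0 < y) {k : ℕ} (hk : 1 ≤ k) (m : ℕ) :
    HasDerivAt (fun y : ℝ => ((y + m) ^ k)⁻¹) (-(k:ℝ) * ((y + m) ^ (k+1))⁻¹) y := by
  have hc : (0:ℝ) < y + m := by positivity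
  have h := (((hasDerivAt_id y).add_const (m:ℝ)).fun_pow k).fun_inv (pow_ne_zero k hc.ne')
  simp only [id] at h
  refine h.congr_deriv ?_
  have h2 : ((y + (m:ℝ)) ^ k) ^ 2 = (y + m) ^ (k-1) * (y + m) ^ (k+1) := by
    rw [← pow_mul, ← pow_add]; congr 1; omega
  rw [h2]
  field_simp

lemma hasDerivAt_Tser {x : ℝ} (hx : 0 < x) {k : ℕ} (hk : 2 ≤ k) :
    HasDerivAt (Tser k) (-(k:ℝ) * Tser (k+1) x) x := by
  have hε : 0 < x/2 := by linarith
  have hc : 0 < min (x/2) 1 := lt_min hε one_pos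
  have key : HasDerivAt (Tser k) (∑' m : ℕ, -(k:ℝ) * ((x + m) ^ (k+1))⁻¹) x := by
    refine hasDerivAt_of_tendstoLocallyUniformlyOn (l := atTop) (g := Tser k)
      (g' := fun y : ℝ => ∑' m : ℕ, -(k:ℝ) * ((y + m) ^ (k+1))⁻¹) (isOpen_Ioi (a := x/2))
      (f := fun n (y : ℝ) => ∑ m ∈ Finset.range n, ((y + m) ^ k)⁻¹)
      (f' := fun n (y : ℝ) => ∑ m ∈ Finset.range n, (-(k:ℝ) * ((y + m) ^ (k+1))⁻¹)) ?_ ?_ ?_ (mem_Ioi.mpr (half_lt_self hx))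
    · apply TendstoUniformlyOn.tendstoLocallyUniformlyOn
      refine tendstoUniformlyOn_tsum_nat
        (u := fun m => (k:ℝ) * ((min (x/2) 1 ^ (k+1))⁻¹ * (((m:ℝ)+1)^2)⁻¹))
        ((summable_sq.mul_left _).mul_left _) ?_
      intro m y hy
      have hy' : x/2 < y := hy
      have hy0 : (0:ℝ) < y := lt_trans hε hy'
      have h0 : (0:ℝ) < y + m := by positivity
      rw [norm_mul, norm_neg, norm_inv]
      simp only [Real.norm_natCast, Real.norm_eq_abs, abs_of_pos (pow_pos h0 _),
        abs_of_nonneg (Nat.cast_nonneg (α := ℝ) k)]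
      gcongr (k:ℝ) * ?_
      calc ((y + (m:ℝ)) ^ (k+1))⁻¹ ≤ ((x/2 + (m:ℝ)) ^ (k+1))⁻¹ := by gcongr
        _ ≤ (min (x/2) 1 ^ (k+1))⁻¹ * (((m:ℝ)+1)^2)⁻¹ := term_le hε (by omega) m
    · filter_upwards with n y hy
      exact HasDerivAt.fun_sum fun m _ => hasDerivAt_term (lt_trans hε hy) (by omega) m
    · intro y hy
      exact (summable_Tser (lt_trans hε hy) hk).hasSum.tendsto_sum_nat
  rwa [tsum_mul_left] at key

section
variable {x : ℝ}

noncomputable def Sser (x : ℝ) : ℝ := ∑' m : ℕ, (((m:ℝ)+1)⁻¹ - (x+m)⁻¹)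
noncomputable def psi (x : ℝ) : ℝ := -Real.eulerMascheroniConstant + Sser x

lemma Sterm_eq {y : ℝ} (hy : 0 < y) (m : ℕ) :
    ((m:ℝ)+1)⁻¹ - (y+m)⁻¹ = (y-1) * (((m:ℝ)+1)*(y+m))⁻¹ := by
  have h1 : ((m:ℝ)+1) ≠ 0 := by positivity
  have h2 : (y+(m:ℝ)) ≠ 0 := by positivity
  field_simp
  ring

lemma Sterm_bound {ε y : ℝ} (hε : 0 < ε) (hεy : ε ≤ y) (m : ℕ) :
    (((m:ℝ)+1)*(y+m))⁻¹ ≤ (min ε 1)⁻¹ * ((((m:ℝ)+1)^2)⁻¹) := by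
  have hc : 0 < min ε 1 := lt_min hε one_pos
  have h1 : min ε 1 * (((m:ℝ)+1)^2) ≤ ((m:ℝ)+1)*(y+m) := by
    have := xn_ge hε m
    have h3 : (0:ℝ) ≤ (m:ℝ) := m.cast_nonneg
    nlinarith
  rw [← mul_inv]
  exact inv_anti₀ (by positivity) h1

lemma summable_Sterm (hx : 0 < x) :
    Summable (fun m : ℕ => ((m:ℝ)+1)⁻¹ - (x+m)⁻¹) := by
  rw [← summable_abs_iff]
  refine Summable.of_nonneg_of_le (fun m => abs_nonneg _)
    (fun m => ?_) ((summable_sq.mul_left ((min x 1)⁻¹)).mul_left |x-1|)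
  rw [Sterm_eq hx m, abs_mul]
  have h0 : (0:ℝ) < x + m := by positivity
  rw [abs_of_pos (by positivity : (0:ℝ) < (((m:ℝ)+1)*(x+m))⁻¹)]
  exact mul_le_mul_of_nonneg_left (Sterm_bound hx le_rfl m) (abs_nonneg _)

lemma hasDerivAt_psi (hx : 0 < x) : HasDerivAt psi (Tser 2 x) x := by
  have hε : 0 < x/2 := by linarith
  refine hasDerivAt_of_tendstoLocallyUniformlyOn (l := atTop) (g := psi)
    (g' := Tser 2) (isOpen_Ioi (a := x/2))
    (f := fun n (y : ℝ) =>
      -Real.eulerMascheroniConstant + ∑ m ∈ Finset.range n, (((m:ℝ)+1)⁻¹ - (y+m)⁻¹))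
    (f' := fun n (y : ℝ) => ∑ m ∈ Finset.range n, ((y + m) ^ 2)⁻¹)
    ?_ ?_ ?_ (mem_Ioi.mpr (half_lt_self hx))
  · apply TendstoUniformlyOn.tendstoLocallyUniformlyOn
    refine tendstoUniformlyOn_tsum_nat
      (u := fun m => (min (x/2) 1 ^ 2)⁻¹ * (((m:ℝ)+1)^2)⁻¹) (summable_sq.mul_left _) ?_
    intro m y hy
    have hy' : x/2 < y := hy
    have hy0 : (0:ℝ) < y := lt_trans hε hy'
    have h0 : (0:ℝ) < y + m := by positivity
    rw [Real.norm_eq_abs, abs_of_pos (by positivity : (0:ℝ) < ((y+m)^2)⁻¹)]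
    calc ((y + (m:ℝ)) ^ 2)⁻¹ ≤ ((x/2 + (m:ℝ)) ^ 2)⁻¹ := by gcongr
      _ ≤ (min (x/2) 1 ^ 2)⁻¹ * (((m:ℝ)+1)^2)⁻¹ := term_le hε le_rfl m
  · filter_upwards with n y hy
    have hy0 : (0:ℝ) < y := lt_trans hε hy
    refine (HasDerivAt.fun_sum fun m _ => ?_).const_add (-Real.eulerMascheroniConstant)
    have h := ((hasDerivAt_const y (((m:ℝ)+1)⁻¹)).fun_sub (hasDerivAt_term hy0 le_rfl m))
    simpa using h
  · intro y hy
    exact ((summable_Sterm (lt_trans hε hy)).hasSum.tendsto_sum_nat).const_add _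
end

lemma harmonic_cast (k : ℕ) : ((harmonic k : ℚ) : ℝ) = ∑ m ∈ Finset.range k, ((m:ℝ)+1)⁻¹ := by
  rw [harmonic]
  push_cast
  rfl

lemma tendsto_a : Tendsto (fun n : ℕ => Real.log n - (harmonic (n+1) : ℝ)) atTop
    (𝓝 (-Real.eulerMascheroniConstant)) := by
  have h2 := Real.tendsto_harmonic_sub_log.comp (tendsto_add_atTop_nat 1)
  have h3 := Real.tendsto_log_nat_add_one_sub_log
  have h := (h2.add h3).neg
  rw [show -(Real.eulerMascheroniConstant + 0) = -Real.eulerMascheroniConstant by ring] at h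
  refine h.congr fun n => ?_
  simp only [Function.comp]
  push_cast
  ring

lemma tendstoUniformlyOn_of_const {a : ℕ → ℝ} {c : ℝ} (h : Tendsto a atTop (𝓝 c)) (s : Set ℝ) :
    TendstoUniformlyOn (fun n (_ : ℝ) => a n) (fun _ => c) atTop s := by
  rw [Metric.tendstoUniformlyOn_iff]
  intro ε hε
  filter_upwards [h (Metric.ball_mem_nhds c hε)] with n hn y _
  rw [dist_comm]
  exact hn

lemma hasDerivAt_logGamma {x : ℝ} (hx : 0 < x) :
    HasDerivAt (fun y : ℝ => Real.log (Real.Gamma y)) (psi x) x := by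
  refine hasDerivAt_of_tendstoLocallyUniformlyOn (l := atTop) (g' := psi)
    (isOpen_Ioi (a := (0:ℝ)))
    (f := fun n (y : ℝ) => Real.BohrMollerup.logGammaSeq y n)
    (f' := fun n (y : ℝ) => Real.log n - ∑ m ∈ Finset.range (n+1), (y+m)⁻¹)
    ?_ ?_ (fun y hy => Real.BohrMollerup.tendsto_log_gamma hy) (mem_Ioi.mpr hx)
  · rw [tendstoLocallyUniformlyOn_iff_forall_isCompact (isOpen_Ioi (a := (0:ℝ)))]
    intro K hK hKc
    rcases K.eq_empty_or_nonempty with rfl | hne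
    · exact tendstoUniformlyOn_empty
    have hεK : sInf K ∈ K := hKc.sInf_mem hne
    have hε : 0 < sInf K := hK hεK
    have hR : ∀ y ∈ K, y ≤ sSup K := fun y hy => le_csSup hKc.bddAbove hy
    have hLε : ∀ y ∈ K, sInf K ≤ y := fun y hy => csInf_le hKc.bddBelow hy
    have hser : TendstoUniformlyOn
        (fun n (y:ℝ) => ∑ m ∈ Finset.range n, (((m:ℝ)+1)⁻¹-(y+m)⁻¹)) Sser atTop K := by
      refine tendstoUniformlyOn_tsum_nat
        (u := fun m => (sSup K + 1) * ((min (sInf K) 1)⁻¹ * (((m:ℝ)+1)^2)⁻¹))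
        ((summable_sq.mul_left _).mul_left _) ?_
      intro m y hy
      have hy0 : 0 < y := lt_of_lt_of_le hε (hLε y hy)
      have h0 : (0:ℝ) < y + m := by positivity
      rw [Real.norm_eq_abs, Sterm_eq hy0 m, abs_mul,
        abs_of_pos (by positivity : (0:ℝ) < (((m:ℝ)+1)*(y+m))⁻¹)]
      have h1 : |y - 1| ≤ sSup K + 1 :=
        abs_le.mpr ⟨by linarith [hR y hy, hy0], by linarith [hR y hy]⟩
      exact mul_le_mul h1 (Sterm_bound hε (hLε y hy) m) (by positivity)
        (by linarith [hR y hy, hy0])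
    have hser' : TendstoUniformlyOn
        (fun n (y:ℝ) => ∑ m ∈ Finset.range (n+1), (((m:ℝ)+1)⁻¹-(y+m)⁻¹)) Sser atTop K :=
      fun u hu => (tendsto_add_atTop_nat 1).eventually (hser u hu)
    have hcomb := (tendstoUniformlyOn_of_const tendsto_a K).add hser'
    have hpsi : psi = fun y : ℝ => -Real.eulerMascheroniConstant + Sser y := rfl
    rw [hpsi]
    refine hcomb.congr ?_
    filter_upwards with n
    intro y hy
    simp only [Pi.add_apply]
    rw [harmonic_cast, Finset.sum_sub_distrib]
    ring
  · filter_upwards with n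
    intro y hy
    have hy0 : (0:ℝ) < y := hy
    have h1 : HasDerivAt (fun y : ℝ => y * Real.log n + Real.log (Nat.factorial n)) (Real.log n) y := by
      simpa using ((hasDerivAt_id y).mul_const (Real.log n)).add_const (Real.log (Nat.factorial n))
    have h2 : HasDerivAt (fun y : ℝ => ∑ m ∈ Finset.range (n+1), Real.log (y + m))
        (∑ m ∈ Finset.range (n+1), (y+m)⁻¹) y := by
      refine HasDerivAt.fun_sum fun m _ => ?_
      have hm : (0:ℝ) < y + m := by positivity
      simpa [one_div] using ((hasDerivAt_id y).add_const (m:ℝ)).log hm.ne'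
    exact h1.sub h2


lemma eqOn_deriv {f g : ℝ → ℝ} (h : EqOn f g (Ioi 0)) : EqOn (deriv f) (deriv g) (Ioi 0) :=
  fun _ hx => (Filter.eventuallyEq_of_mem (Ioi_mem_nhds hx) h).deriv_eq

lemma polygamma_eq {j : ℕ} (hj : 1 ≤ j) :
    EqOn (polygamma j) (fun x => (-1:ℝ)^(j+1) * (Nat.factorial j) * Tser (j+1) x) (Ioi 0) := by
  induction j, hj using Nat.le_induction with
  | base =>
    intro x hx
    have hx0 : (0:ℝ) < x := hx
    have h1 : EqOn (deriv (fun y : ℝ => Real.log (Real.Gamma y))) psi (Ioi 0) :=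
      fun y hy => (hasDerivAt_logGamma hy).deriv
    have : polygamma 1 x = deriv psi x := by
      show iteratedDeriv 2 (fun y : ℝ => Real.log (Real.Gamma y)) x = _
      rw [iteratedDeriv_succ, iteratedDeriv_one]
      exact eqOn_deriv h1 hx
    rw [this, (hasDerivAt_psi hx0).deriv]
    norm_num
  | succ j hj ih =>
    intro x hx
    have hx0 : (0:ℝ) < x := hx
    have h2 : polygamma (j+1) x
        = deriv (fun y => (-1:ℝ)^(j+1) * (Nat.factorial j) * Tser (j+1) y) x := by
      show iteratedDeriv (j+2) (fun y : ℝ => Real.log (Real.Gamma y)) x = _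
      rw [iteratedDeriv_succ]
      exact eqOn_deriv ih hx
    have h3 := ((hasDerivAt_Tser hx0 (k := j+1) (by omega)).const_mul
      ((-1:ℝ)^(j+1) * (Nat.factorial j))).deriv
    rw [h2, h3]
    push_cast
    rw [pow_succ, Nat.factorial_succ]
    push_cast
    ring

lemma eqOn_iteratedDeriv {f g : ℝ → ℝ} (h : EqOn f g (Ioi 0)) (k : ℕ) :
    EqOn (iteratedDeriv k f) (iteratedDeriv k g) (Ioi 0) := by
  induction k with
  | zero => simpa using h
  | succ k ih => rw [iteratedDeriv_succ, iteratedDeriv_succ]; exact eqOn_deriv ih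

lemma x_mul_Tser_le {x : ℝ} (hx : 0 < x) {m : ℕ} (hm : 2 ≤ m) :
    x * Tser (m+1) x ≤ Tser m x := by
  rw [Tser, Tser, ← tsum_mul_left]
  refine ((summable_Tser hx (by omega)).mul_left x).tsum_le_tsum (fun n => ?_)
    (summable_Tser hx hm)
  have h0 : (0:ℝ) < x + n := by positivity
  have h1 : x * ((x+(n:ℝ))^(m+1))⁻¹ ≤ (x+n) * ((x+(n:ℝ))^(m+1))⁻¹ := by
    have := n.cast_nonneg (α := ℝ)
    gcongr
    linarith
  refine h1.trans_eq ?_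
  rw [pow_succ, mul_inv]
  rw [← mul_assoc, mul_comm (x+(n:ℝ)), mul_assoc, mul_inv_cancel₀ h0.ne', mul_one]

lemma hasDerivAt_G {i k : ℕ} (hi : 1 ≤ i) (α : ℝ) {x : ℝ} (hx : 0 < x) :
    HasDerivAt (fun y : ℝ => (α + k) * (((i+k).factorial : ℝ) * Tser (i+k+1) y)
        - y * (((i+k+1).factorial : ℝ) * Tser (i+k+2) y))
      (-((α + (k+1:ℕ)) * (((i+k+1).factorial : ℝ) * Tser (i+k+2) x)
        - x * (((i+k+2).factorial : ℝ) * Tser (i+k+3) x))) x := by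
  have h1 := ((hasDerivAt_Tser hx (k := i+k+1) (by omega)).const_mul
    (((i+k).factorial : ℝ))).const_mul (α + k)
  have h2 := (hasDerivAt_id x).mul
    ((hasDerivAt_Tser hx (k := i+k+2) (by omega)).const_mul (((i+k+1).factorial : ℝ)))
  have h := h1.sub h2
  refine h.congr_deriv ?_
  simp only [id_eq]
  rw [show (i+k+2).factorial = (i+k+2) * (i+k+1).factorial from Nat.factorial_succ _,
    show (i+k+1).factorial = (i+k+1) * (i+k).factorial from Nat.factorial_succ _]
  push_cast
  ring

lemma iter_g {i : ℕ} (hi : 1 ≤ i) (α : ℝ) (k : ℕ) :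
    EqOn (iteratedDeriv k (fun x : ℝ => α * ((i.factorial : ℝ) * Tser (i+1) x)
        - x * (((i+1).factorial : ℝ) * Tser (i+2) x)))
      (fun x : ℝ => (-1:ℝ)^k * ((α + k) * (((i+k).factorial : ℝ) * Tser (i+k+1) x)
        - x * (((i+k+1).factorial : ℝ) * Tser (i+k+2) x))) (Ioi 0) := by
  induction k with
  | zero => intro x hx; simp
  | succ k ih =>
    intro x hx
    have hx0 : (0:ℝ) < x := hx
    rw [iteratedDeriv_succ]
    rw [eqOn_deriv ih hx]
    have h := ((hasDerivAt_G hi α (k := k) hx0).const_mul ((-1:ℝ)^k)).deriv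
    rw [h, pow_succ]
    push_cast
    ring


theorem stmt_12 (i : ℕ) (hi : 1 ≤ i) (α : ℝ) (hα : (i : ℝ) + 1 ≤ α) :
    CompletelyMonotonicOn (fun x : ℝ => α * |polygamma i x| - x * |polygamma (i + 1) x|) := by
  intro k x hx
  have habs : EqOn (fun x : ℝ => α * |polygamma i x| - x * |polygamma (i + 1) x|)
      (fun x : ℝ => α * ((i.factorial : ℝ) * Tser (i+1) x)
        - x * (((i+1).factorial : ℝ) * Tser (i+2) x)) (Ioi 0) := by
    intro y hy
    have hy0 : (0:ℝ) < y := hy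
    have e1 : ∀ j : ℕ, 1 ≤ j → |polygamma j y| = (j.factorial : ℝ) * Tser (j+1) y := by
      intro j hj
      rw [polygamma_eq hj hy, abs_mul, abs_mul, abs_pow, abs_neg, abs_one, one_pow, one_mul,
        Nat.abs_cast, abs_of_nonneg (Tser_nonneg hy0 _)]
    simp only [e1 i hi, e1 (i+1) (by omega)]
  rw [eqOn_iteratedDeriv habs k hx, iter_g hi α k hx, ← mul_assoc, ← mul_pow]
  norm_num
  have key := x_mul_Tser_le hx (m := i+k+1) (by omega)
  have hT : 0 ≤ Tser (i+k+1) x := Tser_nonneg hx _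
  have hfacpos : (0:ℝ) < ((i+k).factorial : ℝ) := by positivity
  have hsucc : ((i+k+1).factorial : ℝ) = ((i+k+1) : ℝ) * ((i+k).factorial : ℝ) := by
    rw [Nat.factorial_succ]; push_cast; ring
  have hαk : ((i:ℝ)+k+1) ≤ α + k := by linarith
  calc x * (((i+k+1).factorial : ℝ) * Tser (i+k+2) x)
      = ((i+k+1).factorial : ℝ) * (x * Tser (i+k+1+1) x) := by ring_nf
    _ ≤ ((i+k+1).factorial : ℝ) * Tser (i+k+1) x := by
        have : (0:ℝ) ≤ ((i+k+1).factorial : ℝ) := by positivity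
        exact mul_le_mul_of_nonneg_left key this
    _ = ((i:ℝ)+k+1) * (((i+k).factorial : ℝ) * Tser (i+k+1) x) := by
        rw [hsucc]; push_cast; ring
    _ ≤ (α + k) * (((i+k).factorial : ℝ) * Tser (i+k+1) x) := by
        apply mul_le_mul_of_nonneg_right hαk
        positivity
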